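/- arXiv:2506.13479 — 2 statements merged into one kernel-verified Lean document; each statement's English description precedes it below -/
import Mathlib

section
/- Let v ∈ ℝ^m be nonzero and w ∈ ℝ^n be nonzero. Among all pairs (p, q) ∈ ℝ^n × ℝ^m satisfying (p q^T) v = w, any minimizer of ‖p‖² + ‖q‖² satisfies that q is a scalar multiple of v. -/
open Matrix

/-- Among all pairs (p, q) with (p qᵀ) v = w (v, w nonzero), any minimizer of
‖p‖² + ‖q‖² satisfies that q is a scalar multiple of v. -/
theorem stmt_0 (m n : ℕ) (v : Fin m → ℝ) (w : Fin n → ℝ)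
    (hv : v ≠ 0) (hw : w ≠ 0)
    (p : Fin n → ℝ) (q : Fin m → ℝ)
    (hconstraint : (vecMulVec p q) *ᵥ v = w)
    (hmin : ∀ p' : Fin n → ℝ, ∀ q' : Fin m → ℝ,
      (vecMulVec p' q') *ᵥ v = w →
      p ⬝ᵥ p + q ⬝ᵥ q ≤ p' ⬝ᵥ p' + q' ⬝ᵥ q') :
    ∃ c : ℝ, q = c • v := by
  have key : ∀ (a : Fin n → ℝ) (b : Fin m → ℝ), vecMulVec a b *ᵥ v = (b ⬝ᵥ v) • a := by
    intro a b; funext i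
    simp [vecMulVec, mulVec, dotProduct, Finset.mul_sum, mul_comm, mul_assoc, mul_left_comm]
  have hvv : v ⬝ᵥ v ≠ 0 := fun h => hv (dotProduct_self_eq_zero.mp h)
  set t := q ⬝ᵥ v with ht
  set c := t / (v ⬝ᵥ v) with hc
  refine ⟨c, ?_⟩
  have hq'v : (c • v) ⬝ᵥ v = t := by
    rw [smul_dotProduct, smul_eq_mul, hc, div_mul_cancel₀ _ hvv]
  have hcon' : vecMulVec p (c • v) *ᵥ v = w := by
    rw [key, hq'v, ht, ← key, hconstraint]
  have hle := hmin p (c • v) hcon'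
  have hqq : q ⬝ᵥ q ≤ (c • v) ⬝ᵥ (c • v) := by linarith
  set u : Fin m → ℝ := q - c • v with hu
  have huv : u ⬝ᵥ v = 0 := by
    rw [hu, sub_dotProduct, hq'v, ht, sub_self]
  have hqdecomp : q ⬝ᵥ q = u ⬝ᵥ u + (c • v) ⬝ᵥ (c • v) := by
    have hq : q = u + c • v := by rw [hu]; ring
    have huv' : (c • v) ⬝ᵥ u = 0 := by
      rw [smul_dotProduct, dotProduct_comm, huv, smul_eq_mul, mul_zero]
    have huv'' : u ⬝ᵥ (c • v) = 0 := by
      rw [dotProduct_comm, huv']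
    rw [hq, add_dotProduct, dotProduct_add, dotProduct_add, huv', huv'']
    ring
  have huu0 : u ⬝ᵥ u ≤ 0 := by linarith
  have huu1 : 0 ≤ u ⬝ᵥ u := by
    apply Finset.sum_nonneg
    intro i _
    exact mul_self_nonneg _
  have : u = 0 := dotProduct_self_eq_zero.mp (le_antisymm huu0 huu1)
  have := sub_eq_zero.mp (hu ▸ this)
  exact this
end

section
/- Let u ∈ ℝ² be standard Gaussian and let x, x' ∈ ℝ² be unit vectors with angle η = arccos(x^T x') between them. Then E[ReLU(u^T x) · ReLU(u^T x')] = ((π − η) cos η + sin η)/(2π). -/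
open Matrix ProbabilityTheory MeasureTheory Real

/-!
In polar coordinates the standard Gaussian density on `ℝ²` is `(2π)⁻¹ e^{-r²/2}` and the
integrand is positively homogeneous of degree two, so the expectation factors into
`(2π)⁻¹ ∫₀^∞ r³ e^{-r²/2} dr = π⁻¹` times an integral over the circle. Writing
`x = (cos α, sin α)` and `x' = (cos β, sin β)`, that angular integral is
`∫ ReLU(cos (θ - α)) ReLU(cos (θ - β)) dθ`; since `β - α ≡ ±η (mod 2π)`, a translation turns it
into `∫ ReLU(cos θ) ReLU(cos (θ - η)) dθ`, whose integrand is supported on `[η - π/2, π/2]`.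
-/

lemma integral_cos_mul_cos_sub (η : ℝ) :
    ∫ θ in (η - π / 2)..(π / 2), cos θ * cos (θ - η) = ((π - η) * cos η + sin η) / 2 := by
  have hprod (θ : ℝ) : cos θ * cos (θ - η) = cos η / 2 + cos (2 * θ - η) / 2 := by
    have h₁ := cos_add θ (θ - η)
    have h₂ := cos_sub θ (θ - η)
    rw [show θ + (θ - η) = 2 * θ - η by ring] at h₁
    rw [sub_sub_cancel] at h₂
    linarith
  simp only [hprod]
  rw [intervalIntegral.integral_add intervalIntegrable_const
      (by apply Continuous.intervalIntegrable; fun_prop),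
    intervalIntegral.integral_const, intervalIntegral.integral_div,
    intervalIntegral.integral_comp_mul_sub (fun θ => cos θ) two_ne_zero,
    integral_cos, show 2 * (π / 2) - η = π - η by ring,
    show 2 * (η - π / 2) - η = -(π - η) by ring, sin_neg, sin_pi_sub, smul_eq_mul]
  ring

open intervalIntegral in
lemma integral_relu_cos_mul_relu_cos_sub {η : ℝ} (hη₀ : 0 ≤ η) (hηπ : η ≤ π) :
    ∫ θ in (-π)..π, max (cos θ) 0 * max (cos (θ - η)) 0 = ((π - η) * cos η + sin η) / 2 := by
  have hπ := pi_pos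
  have hF (a b : ℝ) :
      IntervalIntegrable (fun θ => max (cos θ) 0 * max (cos (θ - η)) 0) volume a b :=
    Continuous.intervalIntegrable (by fun_prop) a b
  rw [← integral_add_adjacent_intervals (hF (-π) (η - π / 2)) (hF _ π),
    ← integral_add_adjacent_intervals (hF _ (π / 2)) (hF _ π)]
  have hleft : ∫ θ in (-π)..(η - π / 2), max (cos θ) 0 * max (cos (θ - η)) 0 = 0 := by
    refine (integral_congr (g := 0) fun θ hθ => ?_).trans integral_zero
    rw [Set.uIcc_of_le (by linarith)] at hθ
    rcases le_or_gt θ (-(π / 2)) with hθ' | hθ'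
    · have : cos θ ≤ 0 := by
        rw [← cos_neg]; exact cos_nonpos_of_pi_div_two_le_of_le (by linarith) (by linarith [hθ.1])
      simp [max_eq_right this]
    · have : cos (θ - η) ≤ 0 := by
        rw [← cos_neg]; exact cos_nonpos_of_pi_div_two_le_of_le (by linarith [hθ.2]) (by linarith)
      simp [max_eq_right this]
  have hright : ∫ θ in (π / 2)..π, max (cos θ) 0 * max (cos (θ - η)) 0 = 0 := by
    refine (integral_congr (g := 0) fun θ hθ => ?_).trans integral_zero
    rw [Set.uIcc_of_le (by linarith)] at hθ
    have : cos θ ≤ 0 := cos_nonpos_of_pi_div_two_le_of_le hθ.1 (by linarith [hθ.2])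
    simp [max_eq_right this]
  have hmiddle : ∫ θ in (η - π / 2)..(π / 2), max (cos θ) 0 * max (cos (θ - η)) 0
      = ∫ θ in (η - π / 2)..(π / 2), cos θ * cos (θ - η) := by
    refine integral_congr fun θ hθ => ?_
    rw [Set.uIcc_of_le (by linarith)] at hθ
    rw [max_eq_left (cos_nonneg_of_mem_Icc ⟨by linarith [hθ.1], hθ.2⟩),
      max_eq_left (cos_nonneg_of_mem_Icc ⟨by linarith [hθ.1], by linarith [hθ.2]⟩)]
  rw [hleft, hright, hmiddle, integral_cos_mul_cos_sub, zero_add, add_zero]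

lemma Function.Periodic.intervalIntegral_comp_sub_eq {f : ℝ → ℝ} {T : ℝ}
    (hf : Function.Periodic f T) (t c : ℝ) :
    ∫ θ in t..t + T, f (θ - c) = ∫ θ in t..t + T, f θ := by
  rw [intervalIntegral.integral_comp_sub_right, add_sub_right_comm, hf.intervalIntegral_add_eq]

lemma integral_relu_cos_sub_mul_relu_cos_sub {α β η : ℝ} (hη : cos η = cos (β - α))
    (hη₀ : 0 ≤ η) (hηπ : η ≤ π) :
    ∫ θ in (-π)..π, max (cos (θ - α)) 0 * max (cos (θ - β)) 0
      = ((π - η) * cos η + sin η) / 2 := by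
  set G : ℝ → ℝ := fun φ => max (cos φ) 0 * max (cos (φ - η)) 0
  have hG : Function.Periodic G (2 * π) := fun φ => by
    simp only [G, cos_add_two_pi, add_sub_right_comm]
  have htranslate (c : ℝ) : ∫ θ in (-π)..π, G (θ - c) = ∫ θ in (-π)..π, G θ := by
    simpa only [show -π + 2 * π = π by ring] using hG.intervalIntegral_comp_sub_eq (-π) c
  rw [← integral_relu_cos_mul_relu_cos_sub hη₀ hηπ]
  obtain ⟨k, hk | hk⟩ := cos_eq_cos_iff.mp hη
  · rw [← htranslate α]
    refine intervalIntegral.integral_congr fun θ _ => ?_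
    rw [show θ - β = θ - α - η - k * (2 * π) by linarith, cos_sub_int_mul_two_pi]
  · rw [← htranslate β]
    refine intervalIntegral.integral_congr fun θ _ => ?_
    rw [mul_comm, show θ - α = θ - β - η + k * (2 * π) by linarith, cos_add_int_mul_two_pi]

lemma integral_Ioi_pow_three_mul_exp_neg_sq_div_two :
    ∫ r in Set.Ioi (0 : ℝ), r ^ 3 * exp (-(r ^ 2 / 2)) = 2 := by
  have h := integral_rpow_mul_exp_neg_mul_rpow (p := 2) (q := 3) (b := 1 / 2)
    two_pos (by norm_num) (by norm_num)
  norm_num [Gamma_two] at h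
  convert h using 5 with r
  ring

lemma gaussianPDFReal_zero_one_mul (a b : ℝ) :
    gaussianPDFReal 0 1 a * gaussianPDFReal 0 1 b
      = (2 * π)⁻¹ * exp (-((a ^ 2 + b ^ 2) / 2)) := by
  simp only [gaussianPDFReal, NNReal.coe_one, mul_one, sub_zero]
  have hsqrt : (√(2 * π))⁻¹ * (√(2 * π))⁻¹ = (2 * π)⁻¹ := by
    rw [← mul_inv, mul_self_sqrt (by positivity)]
  rw [← hsqrt, show -((a ^ 2 + b ^ 2) / 2) = -a ^ 2 / 2 + -b ^ 2 / 2 by ring, exp_add]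
  ring

lemma gaussianReal_prod_gaussianReal :
    (gaussianReal 0 1).prod (gaussianReal 0 1)
      = volume.withDensity fun p : ℝ × ℝ =>
          ENNReal.ofReal ((2 * π)⁻¹ * exp (-((p.1 ^ 2 + p.2 ^ 2) / 2))) := by
  rw [gaussianReal_of_var_ne_zero 0 one_ne_zero, prod_withDensity (measurable_gaussianPDF 0 1)
    (measurable_gaussianPDF 0 1), Measure.volume_eq_prod]
  simp only [gaussianPDF, ← ENNReal.ofReal_mul (gaussianPDFReal_nonneg 0 1 _),
    gaussianPDFReal_zero_one_mul]

lemma integral_gaussianReal_prod_eq_integral_polarCoord (f : ℝ × ℝ → ℝ) :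
    ∫ p, f p ∂(gaussianReal 0 1).prod (gaussianReal 0 1)
      = (2 * π)⁻¹ * ∫ p in polarCoord.target,
          p.1 * exp (-(p.1 ^ 2 / 2)) * f (polarCoord.symm p) := by
  have hdensity :
      Measurable fun p : ℝ × ℝ => (2 * π)⁻¹ * exp (-((p.1 ^ 2 + p.2 ^ 2) / 2)) := by
    fun_prop
  rw [gaussianReal_prod_gaussianReal, integral_withDensity_eq_integral_toReal_smul
    hdensity.ennreal_ofReal (ae_of_all _ fun _ => ENNReal.ofReal_lt_top),
    ← integral_comp_polarCoord_symm, ← integral_const_mul]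
  refine setIntegral_congr_fun polarCoord.open_target.measurableSet fun p _ => ?_
  simp only [polarCoord_symm_apply, smul_eq_mul, mul_pow]
  rw [ENNReal.toReal_ofReal (by positivity), ← mul_add, cos_sq_add_sin_sq, mul_one]
  ring

lemma integral_gaussianReal_prod_of_homogeneous {f : ℝ × ℝ → ℝ}
    (hf : ∀ r : ℝ, 0 < r → ∀ p, f (r • p) = r ^ 2 * f p) :
    ∫ p, f p ∂(gaussianReal 0 1).prod (gaussianReal 0 1)
      = π⁻¹ * ∫ θ in (-π)..π, f (cos θ, sin θ) := by
  have hpolar : ∀ p ∈ polarCoord.target, p.1 * exp (-(p.1 ^ 2 / 2)) * f (polarCoord.symm p)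
      = p.1 ^ 3 * exp (-(p.1 ^ 2 / 2)) * f (cos p.2, sin p.2) := fun p hp => by
    rw [polarCoord_symm_apply, ← smul_eq_mul p.1 (cos p.2), ← smul_eq_mul p.1 (sin p.2),
      ← Prod.smul_mk, hf p.1 hp.1]
    ring
  rw [integral_gaussianReal_prod_eq_integral_polarCoord,
    setIntegral_congr_fun polarCoord.open_target.measurableSet hpolar, polarCoord_target,
    Measure.volume_eq_prod, ← Measure.prod_restrict,
    integral_prod_mul (f := fun r => r ^ 3 * exp (-(r ^ 2 / 2))) (g := fun θ => f (cos θ, sin θ)),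
    integral_Ioi_pow_three_mul_exp_neg_sq_div_two,
    intervalIntegral.integral_of_le (by linarith [pi_pos]), integral_Ioc_eq_integral_Ioo]
  field_simp

lemma exists_eq_cos_sin_of_dotProduct_self {x : Fin 2 → ℝ} (hx : x ⬝ᵥ x = 1) :
    ∃ α, x = ![cos α, sin α] := by
  have hnorm : ‖(⟨x 0, x 1⟩ : ℂ)‖ = 1 := by
    simp only [dotProduct, Fin.sum_univ_two] at hx
    rw [Complex.norm_def, Complex.normSq_mk, hx, sqrt_one]
  have hne : (⟨x 0, x 1⟩ : ℂ) ≠ 0 := norm_ne_zero_iff.mp (hnorm ▸ one_ne_zero)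
  refine ⟨Complex.arg ⟨x 0, x 1⟩, funext fun i => ?_⟩
  fin_cases i
  · simp [Complex.cos_arg hne, hnorm]
  · simp [Complex.sin_arg, hnorm]

lemma integral_relu_dotProduct_mul_relu_dotProduct (α β : ℝ) :
    ∫ u : Fin 2 → ℝ, max (u ⬝ᵥ ![cos α, sin α]) 0 * max (u ⬝ᵥ ![cos β, sin β]) 0
        ∂(Measure.pi fun _ : Fin 2 => gaussianReal 0 1)
      = π⁻¹ * ∫ θ in (-π)..π, max (cos (θ - α)) 0 * max (cos (θ - β)) 0 := by
  set f : ℝ × ℝ → ℝ := fun p =>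
    max (p.1 * cos α + p.2 * sin α) 0 * max (p.1 * cos β + p.2 * sin β) 0
  have hf : ∀ r : ℝ, 0 < r → ∀ p, f (r • p) = r ^ 2 * f p := fun r hr p => by
    have hrelu (t : ℝ) : max (r * t) 0 = r * max t 0 := by
      rw [mul_max_of_nonneg _ _ hr.le, mul_zero]
    simp only [f, Prod.smul_fst, Prod.smul_snd, smul_eq_mul, mul_assoc, ← mul_add, hrelu]
    ring
  calc _ = ∫ p, f p ∂(gaussianReal 0 1).prod (gaussianReal 0 1) := by
        rw [← (measurePreserving_finTwoArrow _).integral_comp' f]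
        simp [f, dotProduct]
    _ = π⁻¹ * ∫ θ in (-π)..π, f (cos θ, sin θ) := integral_gaussianReal_prod_of_homogeneous hf
    _ = _ := by simp only [f, cos_sub, mul_comm]

/-- For u standard Gaussian in ℝ² and unit vectors x, x' with angle η = arccos(xᵀx'),
E[ReLU(uᵀx)ReLU(uᵀx')] = ((π − η)cos η + sin η)/(2π). -/
theorem stmt_9 (x x' : Fin 2 → ℝ) (hx : x ⬝ᵥ x = 1) (hx' : x' ⬝ᵥ x' = 1) :
    let η : ℝ := Real.arccos (x ⬝ᵥ x')
    ∫ u : Fin 2 → ℝ, (max (u ⬝ᵥ x) 0) * (max (u ⬝ᵥ x') 0)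
        ∂(Measure.pi fun _ : Fin 2 => gaussianReal 0 1)
      = ((π - η) * Real.cos η + Real.sin η) / (2 * π) := by
  intro η
  obtain ⟨α, rfl⟩ := exists_eq_cos_sin_of_dotProduct_self hx
  obtain ⟨β, rfl⟩ := exists_eq_cos_sin_of_dotProduct_self hx'
  have hdot : ![cos α, sin α] ⬝ᵥ ![cos β, sin β] = cos (β - α) := by
    simp [dotProduct, cos_sub, mul_comm]
  have hη : cos η = cos (β - α) := by
    rw [show η = arccos (cos (β - α)) from congrArg arccos hdot,
      cos_arccos (neg_one_le_cos _) (cos_le_one _)]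
  rw [integral_relu_dotProduct_mul_relu_dotProduct,
    integral_relu_cos_sub_mul_relu_cos_sub hη (arccos_nonneg _) (arccos_le_pi _)]
  field_simp
end
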